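/- Let K be a number field. For a Witt vector ξ ∈ W_{O_K}(O_K), the following four conditions are equivalent: (1) ξ is integral over O_K (with respect to the structure map sending c ∈ O_K to the constant vector with all coefficients c); (2) the set of coefficients C_ξ = { ξ_a : a ∈ I_K } is finite; (3) the orbit I_K·ξ = { ψ_a ξ : a ∈ I_K } under the shift operators is finite; (4) ξ is automatic. -/

import Mathlib

open NumberField

noncomputable section

/-- The multiplicative monoid `I_K` of nonzero ideals of the ring of integers of `K`. -/
def IdealMonoid (K : Type) [Field K] [NumberField K] : Submonoid (Ideal (𝓞 K)) where
  carrier := {I | I ≠ ⊥}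
  mul_mem' := by
    intro a b ha hb h
    rcases Ideal.mul_eq_bot.mp h with h' | h'
    · exact ha h'
    · exact hb h'
  one_mem' := by
    simp only [Set.mem_setOf_eq, Ideal.one_eq_top]
    exact top_ne_bot

/-- `I_K`, the monoid of nonzero ideals, as a type. -/
abbrev IK (K : Type) [Field K] [NumberField K] := ↥(IdealMonoid K)

/-- `P_K`, the set of nonzero prime ideals of `𝓞 K`, as a type. -/
def PrimeIdeal (K : Type) [Field K] [NumberField K] :=
  {p : Ideal (𝓞 K) // p.IsPrime ∧ p ≠ ⊥}

/-- A nonzero prime ideal, regarded as an element of `I_K`. -/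
def PrimeIdeal.toIK {K : Type} [Field K] [NumberField K] (p : PrimeIdeal K) : IK K :=
  ⟨p.1, p.2.2⟩

/-- `#k_p`: the cardinality of the residue ring `R ⧸ p`. -/
def residueCard {R : Type} [CommRing R] (p : Ideal R) : ℕ :=
  Nat.card (R ⧸ p)

/-- The shift operator `ψ_a` on `A^{I_K}`: `(ψ_a ξ)_b = ξ_{a·b}`. -/
def shift {K : Type} [Field K] [NumberField K] {A : Type} (a : IK K)
    (ξ : IK K → A) : IK K → A :=
  fun b => ξ (a * b)

/-- For an ideal `p` of `𝓞 K` and a subset `S ⊆ A^{I_K}`, the set `p·S` of all finite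
sums of products of elements of `p` with elements of (the module generated by) `S`. -/
def idealMulSet {K : Type} [Field K] [NumberField K] {A : Type} [CommRing A]
    [Algebra (𝓞 K) A] (p : Ideal (𝓞 K)) (S : Set (IK K → A)) : Set (IK K → A) :=
  ↑(p • Submodule.span (𝓞 K) S)

/-- The descending chain `U_n(A)` of subsets of `A^{I_K}`. -/
def UnSet (K : Type) [Field K] [NumberField K] (A : Type) [CommRing A]
    [Algebra (𝓞 K) A] : ℕ → Set (IK K → A)
  | 0 => Set.univ
  | n + 1 => {ξ | ξ ∈ UnSet K A n ∧ ∀ p : PrimeIdeal K,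
      shift p.toIK ξ - ξ ^ residueCard p.1 ∈ idealMulSet p.1 (UnSet K A n)}

/-- The ring of Witt vectors `W_{O_K}(A) = ⋂ₙ U_n(A)`, as a subset of `A^{I_K}`. -/
def WittSet (K : Type) [Field K] [NumberField K] (A : Type) [CommRing A]
    [Algebra (𝓞 K) A] : Set (IK K → A) :=
  ⋂ n, UnSet K A n

/-- A deterministic finite automaton with output, over input alphabet `Δ` and
output alphabet `O`. -/
structure DFAO (Δ O : Type) : Type 1 where
  State : Type
  [finState : Finite State]
  trans : State → Δ → State
  start : State
  out : State → O

/-- The output of a DFAO on an input word, processing letters from left to right. -/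
def DFAO.output {Δ O : Type} (M : DFAO Δ O) (l : List Δ) : O :=
  M.out (l.foldl M.trans M.start)

/-- `ξ ∈ A^{I_K}` is automatic if some DFAO with input alphabet `P_K` and output
alphabet `A` produces `ξ_a` from every word of primes whose product is `a`. -/
def IsAutomatic {K : Type} [Field K] [NumberField K] {A : Type}
    (ξ : IK K → A) : Prop :=
  ∃ M : DFAO (PrimeIdeal K) A, ∀ (l : List (PrimeIdeal K)) (a : IK K),
    (a : Ideal (𝓞 K)) = (l.map Subtype.val).prod → ξ a = M.output l

/-- `v_p(a)`: the largest `e` such that `p^e` divides `a`. -/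
def vIdeal {R : Type} [CommRing R] (p a : Ideal R) : ℕ :=
  sSup {e : ℕ | p ^ e ∣ a}

/-!
Iterating the defining congruences `ψ_p ξ ≡ ξ ^ #k_p (mod p · U_n)` of a Witt vector gives
`ξ_{p^(n+1) c} ≡ ξ_{p^n c} (mod p^(n+1))` for all `p`, `n`, `c`, because `#k_p ∈ p` turns a
congruence mod `p^j` into one mod `p^(j+1)` after raising to the power `#k_p`.

Suppose the coefficients of Witt vectors `η, η'` lie in a finite set `C`, and let `d ≠ 0` be
divisible by every difference of distinct elements of `C`. If `η` and `η'` agree on the divisors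
of `(d)`, they agree everywhere: for `b ∤ (d)` pick `p^(n+1) ∣ b` with `p^(n+1) ∤ (d)`; by
induction `η, η'` agree at `b / p`, so `η_b ≡ η'_b (mod p^(n+1))`, and a nonzero `η_b - η'_b`
would divide `d`. Hence there are finitely many such Witt vectors, and as the shifts of `ξ` are
among them, a Witt vector with finitely many coefficients has a finite orbit. The orbit of `ξ` is the state set of an automaton
computing `ξ`, the outputs of an automaton are finitely many, and a vector with finitely many
coefficients `c` is a root of `∏ (X - c)`.
-/

section CommRing

variable {R : Type*} [CommRing R]

theorem Ideal.pow_sub_pow_mem_pow_succ {I : Ideal R} {n : ℕ} (hn : (n : R) ∈ I) {x y : R}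
    {j : ℕ} (hj : j ≠ 0) (hxy : x - y ∈ I ^ j) : x ^ n - y ^ n ∈ I ^ (j + 1) := by
  have hsum : ∑ i ∈ Finset.range n, x ^ i * y ^ (n - 1 - i) ∈ I := by
    have hx : Ideal.Quotient.mk I x = Ideal.Quotient.mk I y :=
      Ideal.Quotient.eq.2 (Ideal.pow_le_self hj hxy)
    rw [← Ideal.Quotient.eq_zero_iff_mem, map_sum]
    simp only [map_mul, map_pow, hx, geom_sum₂_self]
    rw [← map_natCast (Ideal.Quotient.mk I), Ideal.Quotient.eq_zero_iff_mem.2 hn, zero_mul]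
  rw [← geom_sum₂_mul, pow_succ']
  exact Ideal.mul_mem_mul hsum hxy

theorem Ideal.natCast_natCard_quotient_mem (I : Ideal R) [Finite (R ⧸ I)] :
    (Nat.card (R ⧸ I) : R) ∈ I := by
  have := Fintype.ofFinite (R ⧸ I)
  rw [← Ideal.Quotient.eq_zero_iff_mem, map_natCast, Nat.card_eq_fintype_card,
    Nat.cast_card_eq_zero]

theorem Ideal.pow_natCard_quotient_sub_mem (I : Ideal R) [I.IsMaximal] [Finite (R ⧸ I)]
    (c : R) : c ^ Nat.card (R ⧸ I) - c ∈ I := by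
  let := Ideal.Quotient.field I
  have := Fintype.ofFinite (R ⧸ I)
  rw [← Ideal.Quotient.eq_zero_iff_mem, map_sub, map_pow, Nat.card_eq_fintype_card,
    FiniteField.pow_card, sub_self]

theorem exists_ne_zero_forall_sub_dvd [IsDomain R] {C : Set R} (hC : C.Finite) :
    ∃ d ≠ (0 : R), ∀ c ∈ C, ∀ c' ∈ C, c ≠ c' → c - c' ∣ d := by
  classical
  refine ⟨∏ x ∈ hC.toFinset.offDiag, (x.1 - x.2), ?_, fun c hc c' hc' hne => ?_⟩
  · exact Finset.prod_ne_zero_iff.2 fun x hx => sub_ne_zero.2 (Finset.mem_offDiag.1 hx).2.2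
  · exact Finset.dvd_prod_of_mem (fun x : R × R => x.1 - x.2) (a := (c, c'))
      (Finset.mem_offDiag.2 ⟨hC.mem_toFinset.2 hc, hC.mem_toFinset.2 hc', hne⟩)

open Polynomial in
theorem Pi.isIntegral_iff_finite_range [IsDomain R] {ι : Type*} {f : ι → R} :
    IsIntegral R f ↔ (Set.range f).Finite := by
  constructor
  · rintro ⟨P, hmonic, hP⟩
    refine (P.finite_setOfPred_isRoot hmonic.ne_zero).subset ?_
    rintro _ ⟨i, rfl⟩
    have := congrFun (show aeval f P = 0 from hP) i
    rwa [aeval_pi_apply₂, coe_aeval_eq_eval] at this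
  · intro h
    refine ⟨∏ c ∈ h.toFinset, (X - C c),
      monic_prod_of_monic _ _ fun c _ => monic_X_sub_C c, ?_⟩
    show aeval f _ = 0
    funext i
    rw [aeval_pi_apply₂, coe_aeval_eq_eval, eval_prod]
    exact Finset.prod_eq_zero (h.mem_toFinset.2 ⟨i, rfl⟩) (by simp)

def valuedIn (ι : Type*) (I : Ideal R) : Submodule R (ι → R) :=
  Submodule.pi Set.univ fun _ => I

theorem mem_valuedIn {ι : Type*} {I : Ideal R} {v : ι → R} :
    v ∈ valuedIn ι I ↔ ∀ i, v i ∈ I := by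
  simp [valuedIn]

theorem smul_le_valuedIn_mul {ι : Type*} {I J : Ideal R} {N : Submodule R (ι → R)}
    (hN : N ≤ valuedIn ι J) : I • N ≤ valuedIn ι (I * J) :=
  Submodule.smul_le.2 fun _ hr _ hv =>
    mem_valuedIn.2 fun i => Ideal.mul_mem_mul hr (mem_valuedIn.1 (hN hv) i)

end CommRing

theorem exists_prime_pow_succ_dvd_not_dvd {α : Type*} [CommMonoidWithZero α]
    [UniqueFactorizationMonoid α] {a b : α} (ha : a ≠ 0) (h : ¬ a ∣ b) :
    ∃ p, Prime p ∧ ∃ n : ℕ, p ^ (n + 1) ∣ a ∧ ¬ p ^ (n + 1) ∣ b := by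
  obtain ⟨p, hp, hlt⟩ : ∃ p, Prime p ∧ emultiplicity p b < emultiplicity p a := by
    simpa [UniqueFactorizationMonoid.dvd_iff_emultiplicity_le ha] using h
  obtain ⟨n, hn⟩ := ENat.ne_top_iff_exists.1 (ne_top_of_lt hlt)
  refine ⟨p, hp, n, pow_dvd_iff_le_emultiplicity.2 ?_, fun hdvd => ?_⟩
  · exact Order.add_one_le_of_lt (by simpa [← hn] using hlt)
  · have := pow_dvd_iff_le_emultiplicity.1 hdvd
    rw [← hn] at this
    norm_cast at this
    omega

section Shift

variable {K : Type} [Field K] [NumberField K] {A : Type}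

theorem shift_one (ξ : IK K → A) : shift 1 ξ = ξ :=
  funext fun b => congrArg ξ (one_mul b)

theorem shift_shift (a b : IK K) (ξ : IK K → A) : shift a (shift b ξ) = shift (a * b) ξ :=
  funext fun c => congrArg ξ (by rw [mul_left_comm, ← mul_assoc])

theorem shift_pow_succ (a : IK K) (n : ℕ) (ξ : IK K → A) :
    shift (a ^ (n + 1)) ξ = shift (a ^ n) (shift a ξ) := by
  rw [shift_shift, pow_succ]

theorem shift_add [Add A] (a : IK K) (ξ η : IK K → A) :
    shift a (ξ + η) = shift a ξ + shift a η :=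
  rfl

theorem shift_sub [Sub A] (a : IK K) (ξ η : IK K → A) :
    shift a (ξ - η) = shift a ξ - shift a η :=
  rfl

theorem shift_pow [Monoid A] (a : IK K) (ξ : IK K → A) (n : ℕ) :
    shift a (ξ ^ n) = shift a ξ ^ n :=
  rfl

theorem shift_eq_funLeft (R : Type*) [Semiring R] [AddCommMonoid A] [Module R A] (a : IK K)
    (ξ : IK K → A) : shift a ξ = LinearMap.funLeft R A (a * ·) ξ :=
  rfl

theorem shift_mem_UnSet [CommRing A] [Algebra (𝓞 K) A] (a : IK K) :
    ∀ {n : ℕ} {ξ : IK K → A}, ξ ∈ UnSet K A n → shift a ξ ∈ UnSet K A n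
  | 0, _, _ => trivial
  | n + 1, ξ, ⟨hξ, hp⟩ => by
    refine ⟨shift_mem_UnSet a hξ, fun p => ?_⟩
    have hmaps : (p.1 • Submodule.span (𝓞 K) (UnSet K A n)).map
        (LinearMap.funLeft (𝓞 K) A (a * ·)) ≤ p.1 • Submodule.span (𝓞 K) (UnSet K A n) := by
      rw [Submodule.map_smul'', Submodule.map_span]
      refine smul_mono_right _ (Submodule.span_le.2 ?_)
      rintro _ ⟨η, hη, rfl⟩
      exact Submodule.subset_span (shift_mem_UnSet a hη)
    have hcomm : shift p.toIK (shift a ξ) - shift a ξ ^ residueCard p.1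
        = shift a (shift p.toIK ξ - ξ ^ residueCard p.1) := by
      rw [shift_sub, shift_pow, shift_shift, shift_shift, mul_comm]
    rw [hcomm, shift_eq_funLeft (𝓞 K)]
    exact hmaps (Submodule.mem_map_of_mem (hp p))

theorem shift_mem_WittSet [CommRing A] [Algebra (𝓞 K) A] (a : IK K) {ξ : IK K → A}
    (hξ : ξ ∈ WittSet K A) : shift a ξ ∈ WittSet K A :=
  Set.mem_iInter.2 fun n => shift_mem_UnSet a (Set.mem_iInter.1 hξ n)

end Shift

section Congruence

variable {K : Type} [Field K] [NumberField K]

instance PrimeIdeal.isMaximal (p : PrimeIdeal K) : p.1.IsMaximal :=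
  p.2.1.isMaximal p.2.2

@[simp]
theorem PrimeIdeal.coe_toIK (p : PrimeIdeal K) : (p.toIK : Ideal (𝓞 K)) = p.1 :=
  rfl

theorem shift_pow_succ_sub_shift_pow_mem_valuedIn (p : PrimeIdeal K) :
    ∀ (m : ℕ) {u : IK K → 𝓞 K}, u ∈ UnSet K (𝓞 K) (m + 1) →
      shift (p.toIK ^ (m + 1)) u - shift (p.toIK ^ m) u ∈ valuedIn (IK K) (p.1 ^ (m + 1))
  | 0, u, hu => by
    have hdefect : shift p.toIK u - u ^ residueCard p.1 ∈ valuedIn (IK K) p.1 := by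
      have := smul_le_valuedIn_mul (I := p.1)
        (fun _ _ => mem_valuedIn.2 fun _ => Submodule.mem_top) (hu.2 p)
      rwa [Ideal.mul_top] at this
    have hfermat : u ^ residueCard p.1 - u ∈ valuedIn (IK K) p.1 :=
      mem_valuedIn.2 fun b => Ideal.pow_natCard_quotient_sub_mem p.1 (u b)
    rw [zero_add, pow_one, pow_one, pow_zero, shift_one,
      ← sub_add_sub_cancel _ (u ^ residueCard p.1)]
    exact add_mem hdefect hfermat
  | m + 1, u, hu => by
    -- `ψ_p u = u ^ q + δ` with `δ ∈ p • span U_(m+1)`: the inductive hypothesis is used both for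
    -- `u` (through the `q`-th powers) and for the whole span (through `δ`).
    set q := residueCard p.1
    set δ := shift p.toIK u - u ^ q
    let Δ := LinearMap.funLeft (𝓞 K) (𝓞 K) (p.toIK ^ (m + 1) * ·)
      - LinearMap.funLeft (𝓞 K) (𝓞 K) (p.toIK ^ m * ·)
    have hshift : ∀ k,
        shift (p.toIK ^ (k + 1)) u = shift (p.toIK ^ k) u ^ q + shift (p.toIK ^ k) δ := fun k => by
      rw [shift_pow_succ, show shift p.toIK u = u ^ q + δ by ring, shift_add, shift_pow]
    have hsplit : shift (p.toIK ^ (m + 1 + 1)) u - shift (p.toIK ^ (m + 1)) u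
        = (shift (p.toIK ^ (m + 1)) u ^ q - shift (p.toIK ^ m) u ^ q) + Δ δ := by
      rw [hshift (m + 1), hshift m]
      simp only [Δ, LinearMap.sub_apply, ← shift_eq_funLeft]
      ring
    rw [hsplit]
    refine add_mem (mem_valuedIn.2 fun b => ?_) ?_
    · exact Ideal.pow_sub_pow_mem_pow_succ (Ideal.natCast_natCard_quotient_mem p.1)
        m.succ_ne_zero (mem_valuedIn.1 (shift_pow_succ_sub_shift_pow_mem_valuedIn p m hu.1) b)
    · have hspan : Submodule.span (𝓞 K) (UnSet K (𝓞 K) (m + 1))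
          ≤ (valuedIn (IK K) (p.1 ^ (m + 1))).comap Δ :=
        Submodule.span_le.2 fun v hv => shift_pow_succ_sub_shift_pow_mem_valuedIn p m hv
      have hmaps : (p.1 • Submodule.span (𝓞 K) (UnSet K (𝓞 K) (m + 1))).map Δ
          ≤ valuedIn (IK K) (p.1 ^ (m + 2)) := by
        rw [Submodule.map_smul'', pow_succ' p.1 (m + 1)]
        exact smul_le_valuedIn_mul (Submodule.map_le_iff_le_comap.2 hspan)
      exact hmaps (Submodule.mem_map_of_mem (hu.2 p))

theorem apply_pow_succ_mul_sub_mem_of_mem_WittSet {ξ : IK K → 𝓞 K} (hξ : ξ ∈ WittSet K (𝓞 K))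
    (p : PrimeIdeal K) (n : ℕ) (c : IK K) :
    ξ (p.toIK ^ (n + 1) * c) - ξ (p.toIK ^ n * c) ∈ p.1 ^ (n + 1) :=
  mem_valuedIn.1 (shift_pow_succ_sub_shift_pow_mem_valuedIn p n (Set.mem_iInter.1 hξ _)) c

end Congruence

section Finiteness

variable {K : Type} [Field K] [NumberField K]

theorem IK.exists_eq_pow_succ_mul_of_not_dvd {b : IK K} {J : Ideal (𝓞 K)}
    (hb : ¬ (b : Ideal (𝓞 K)) ∣ J) :
    ∃ (p : PrimeIdeal K) (n : ℕ) (c : IK K),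
      b = p.toIK ^ (n + 1) * c ∧ ¬ p.1 ^ (n + 1) ∣ J := by
  obtain ⟨P, hP, n, ⟨c, hc⟩, hn⟩ := exists_prime_pow_succ_dvd_not_dvd b.2 hb
  have hc0 : c ≠ ⊥ := fun h => b.2 (by rw [hc, h, Ideal.mul_bot])
  exact ⟨⟨P, Ideal.isPrime_of_prime hP, hP.ne_zero⟩, n, ⟨c, hc0⟩, Subtype.ext hc, hn⟩

theorem IK.dvdNotUnit_pow_mul_pow_succ_mul (p : PrimeIdeal K) (n : ℕ) (c : IK K) :
    DvdNotUnit ((p.toIK ^ n * c : IK K) : Ideal (𝓞 K)) (p.toIK ^ (n + 1) * c : IK K) :=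
  ⟨(p.toIK ^ n * c).2, p.1, fun h => p.2.1.ne_top (Ideal.isUnit_iff.1 h), by
    simp only [Submonoid.coe_mul, SubmonoidClass.coe_pow, PrimeIdeal.coe_toIK, pow_succ]
    ring⟩

theorem eq_of_forall_dvd_span_eq {d : 𝓞 K} {η η' : IK K → 𝓞 K}
    (hη : η ∈ WittSet K (𝓞 K)) (hη' : η' ∈ WittSet K (𝓞 K))
    (hsep : ∀ b, η b ≠ η' b → η b - η' b ∣ d)
    (hagree : ∀ b : IK K, (b : Ideal (𝓞 K)) ∣ Ideal.span {d} → η b = η' b) : η = η' := by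
  have hwf := InvImage.wf (fun b : IK K => (b : Ideal (𝓞 K))) wellFounded_dvdNotUnit
  funext b
  induction b using hwf.induction with
  | _ b ih =>
  by_cases hb : (b : Ideal (𝓞 K)) ∣ Ideal.span {d}
  · exact hagree b hb
  obtain ⟨p, n, c, rfl, hpn⟩ := IK.exists_eq_pow_succ_mul_of_not_dvd hb
  by_contra hne
  have hlower : η (p.toIK ^ n * c) = η' (p.toIK ^ n * c) :=
    ih _ (IK.dvdNotUnit_pow_mul_pow_succ_mul p n c)
  have hmem : η (p.toIK ^ (n + 1) * c) - η' (p.toIK ^ (n + 1) * c) ∈ p.1 ^ (n + 1) := by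
    have := sub_mem (apply_pow_succ_mul_sub_mem_of_mem_WittSet hη p n c)
      (apply_pow_succ_mul_sub_mem_of_mem_WittSet hη' p n c)
    rwa [hlower, sub_sub_sub_cancel_right] at this
  obtain ⟨e, he⟩ := hsep _ hne
  refine hpn (Ideal.dvd_iff_le.2 ((Ideal.span_singleton_le_iff_mem _).2 ?_))
  rw [he]
  exact Ideal.mul_mem_right e _ hmem

theorem finite_setOf_mem_WittSet_range_subset {C : Set (𝓞 K)} (hC : C.Finite) :
    {η | η ∈ WittSet K (𝓞 K) ∧ Set.range η ⊆ C}.Finite := by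
  obtain ⟨d, hd, hsep⟩ := exists_ne_zero_forall_sub_dvd hC
  have hspan : Ideal.span {d} ≠ 0 := by simpa using hd
  let D := {b : IK K // (b : Ideal (𝓞 K)) ∣ Ideal.span {d}}
  have : Fintype {I : Ideal (𝓞 K) // I ∣ Ideal.span {d}} :=
    UniqueFactorizationMonoid.fintypeSubtypeDvd _ hspan
  have : Finite D := Finite.of_injective (fun b : D => (⟨b.1.1, b.2⟩ : {I // I ∣ _}))
    fun _ _ h => Subtype.ext (Subtype.ext (by simpa using h))
  refine Set.Finite.of_injOn (f := fun η (b : D) => η b.1) (t := Set.pi Set.univ fun _ => C)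
    (fun η hη b _ => hη.2 ⟨b.1, rfl⟩) (fun η hη η' hη' h => ?_) (Set.Finite.pi fun _ => hC)
  refine eq_of_forall_dvd_span_eq hη.1 hη'.1
    (fun b hne => hsep _ (hη.2 ⟨b, rfl⟩) _ (hη'.2 ⟨b, rfl⟩) hne) fun b hb => congrFun h ⟨b, hb⟩

theorem finite_range_shift_of_finite_range {ξ : IK K → 𝓞 K} (hξ : ξ ∈ WittSet K (𝓞 K))
    (hfin : (Set.range ξ).Finite) : (Set.range fun a : IK K => shift a ξ).Finite := by
  refine (finite_setOf_mem_WittSet_range_subset hfin).subset ?_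
  rintro _ ⟨a, rfl⟩
  exact ⟨shift_mem_WittSet a hξ, fun _ ⟨b, hb⟩ => ⟨a * b, hb⟩⟩

end Finiteness

section Automata

variable {K : Type} [Field K] [NumberField K] {A : Type}

theorem exists_list_primeIdeal_prod_eq {I : Ideal (𝓞 K)} (hI : I ≠ ⊥) :
    ∃ l : List (PrimeIdeal K), (l.map Subtype.val).prod = I := by
  induction I using UniqueFactorizationMonoid.induction_on_prime with
  | h₁ => exact absurd rfl hI
  | h₂ u hu => exact ⟨[], (isUnit_iff_eq_one.1 hu).symm⟩
  | h₃ I P hI0 hP ih =>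
    obtain ⟨l, hl⟩ := ih hI0
    exact ⟨⟨P, Ideal.isPrime_of_prime hP, hP.ne_zero⟩ :: l, congrArg (P * ·) hl⟩

theorem IsAutomatic.finite_range {ξ : IK K → A} (h : IsAutomatic ξ) : (Set.range ξ).Finite := by
  obtain ⟨M, hM⟩ := h
  have := M.finState
  refine (Set.finite_range M.out).subset ?_
  rintro _ ⟨a, rfl⟩
  obtain ⟨l, hl⟩ := exists_list_primeIdeal_prod_eq a.2
  exact ⟨_, (hM l a hl.symm).symm⟩

theorem foldl_shift (l : List (PrimeIdeal K)) (ξ : IK K → A) :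
    l.foldl (fun η p => shift p.toIK η) ξ = shift (l.map PrimeIdeal.toIK).prod ξ := by
  induction l generalizing ξ with
  | nil => exact (shift_one ξ).symm
  | cons p l ih =>
    rw [List.foldl_cons, ih, shift_shift, List.map_cons, List.prod_cons, mul_comm]

theorem isAutomatic_of_finite_range_shift {ξ : IK K → A}
    (h : (Set.range fun a : IK K => shift a ξ).Finite) : IsAutomatic ξ := by
  have := h.to_subtype
  let orbit := Set.range fun a : IK K => shift a ξ
  let M : DFAO (PrimeIdeal K) A :=
    { State := orbit
      trans := fun η p => ⟨shift p.toIK η.1, by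
        obtain ⟨a, ha⟩ := η.2
        exact ⟨p.toIK * a, by rw [← ha, shift_shift]⟩⟩
      start := ⟨ξ, 1, shift_one ξ⟩
      out := fun η => η.1 1 }
  have hfold : ∀ (l : List (PrimeIdeal K)) (η : orbit),
      (l.foldl M.trans η).1 = l.foldl (fun η p => shift p.toIK η) η.1 := by
    intro l
    induction l with
    | nil => exact fun _ => rfl
    | cons p l ih => exact fun η => ih (M.trans η p)
  refine ⟨M, fun l a ha => ?_⟩
  have hprod : a = (l.map PrimeIdeal.toIK).prod := by
    apply Subtype.ext
    rw [ha, SubmonoidClass.coe_list_prod, List.map_map]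
    rfl
  show ξ a = (l.foldl M.trans M.start).1 1
  rw [hfold, foldl_shift, ← hprod]
  exact congrArg ξ (mul_one a).symm

end Automata

/-- base case of the arithmetic Christol theorem: for `ξ ∈ W_{O_K}(O_K)`,
the following are equivalent: (1) `ξ` is integral over `O_K`; (2) the set of
coefficients of `ξ` is finite; (3) the orbit of `ξ` under the shifts is finite;
(4) `ξ` is automatic. -/
theorem christol_base_case (K : Type) [Field K] [NumberField K]
    (ξ : IK K → 𝓞 K) (hξ : ξ ∈ WittSet K (𝓞 K)) :
    List.TFAE [IsIntegral (𝓞 K) ξ,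
      (Set.range ξ).Finite,
      (Set.range fun a : IK K => shift a ξ).Finite,
      IsAutomatic ξ] := by
  tfae_have 1 ↔ 2 := Pi.isIntegral_iff_finite_range
  tfae_have 2 → 3 := finite_range_shift_of_finite_range hξ
  tfae_have 3 → 4 := isAutomatic_of_finite_range_shift
  tfae_have 4 → 2 := IsAutomatic.finite_range
  tfae_finish

end
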